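/- If φ, ψ are commuting endomorphisms of an infinite subshift, then α^+(φψ) ≤ α^+(φ) + α^+(ψ) and α^-(φψ) ≥ α^-(φ) + α^-(ψ). In particular, for an automorphism φ, α^+(φ) + α^+(φ^{-1}) ≥ 0 and α^-(φ) + α^-(φ^{-1}) ≤ 0. -/

import Mathlib

open Filter Topology

/-- The left shift on bi-infinite sequences. -/
def shift {A : Type*} (x : ℤ → A) : ℤ → A := fun n => x (n + 1)

/-- The shift by `k` places (`σ^k`). -/
def zshift {A : Type*} (k : ℤ) (x : ℤ → A) : ℤ → A := fun n => x (n + k)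

/-- A subshift: a closed, shift-invariant subset of `Σ^ℤ`. -/
def IsSubshift {A : Type*} [TopologicalSpace A] (X : Set (ℤ → A)) : Prop :=
  IsClosed X ∧ shift '' X = X

/-- An endomorphism of the subshift `X`: a continuous shift-commuting surjection of `X`. -/
structure IsEndo {A : Type*} [TopologicalSpace A] (X : Set (ℤ → A))
    (φ : (ℤ → A) → (ℤ → A)) : Prop where
  maps : Set.MapsTo φ X X
  surj : Set.SurjOn φ X X
  cont : ContinuousOn φ X
  comm : ∀ x ∈ X, φ (shift x) = shift (φ x)

/-- `S` φ-codes `T`: agreement of two points of `X` on `S` forces agreement of their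
φ-images on `T`. -/
def Codes {A : Type*} (X : Set (ℤ → A)) (φ : (ℤ → A) → (ℤ → A)) (S T : Set ℤ) : Prop :=
  ∀ x ∈ X, ∀ y ∈ X, (∀ i ∈ S, x i = y i) → ∀ j ∈ T, φ x j = φ y j

/-- The set of integers `W` such that `[0,∞)` φⁿ-codes `[W,∞)`; `W⁺(n,φ)` is its
least element. -/
def WplusSet {A : Type*} (X : Set (ℤ → A)) (φ : (ℤ → A) → (ℤ → A)) (n : ℕ) : Set ℤ :=
  {W | Codes X (φ^[n]) (Set.Ici 0) (Set.Ici W)}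

/-- The set of integers `W` such that `(-∞,0]` φⁿ-codes `(-∞,W]`; `W⁻(n,φ)` is its
greatest element. -/
def WminusSet {A : Type*} (X : Set (ℤ → A)) (φ : (ℤ → A) → (ℤ → A)) (n : ℕ) : Set ℤ :=
  {W | Codes X (φ^[n]) (Set.Iic 0) (Set.Iic W)}

/-- A subshift of finite type: defined by a finite set of excluded words. -/
def IsSFT {A : Type*} (X : Set (ℤ → A)) : Prop :=
  ∃ F : Set (List A), F.Finite ∧
    ∀ x : ℤ → A, x ∈ X ↔ ∀ (n : ℤ), ∀ w ∈ F, ∃ i : Fin w.length, x (n + i) ≠ w.get i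

/-!
Coding composes: if `[0,∞)` ψⁿ-codes `[W₂,∞)` and hence, by shift-equivariance, `[W₂,∞)`
φⁿ-codes `[W₁ + W₂,∞)`, then `[0,∞)` codes `[W₁ + W₂,∞)` for `(φψ)ⁿ = φⁿψⁿ`. So
`W⁺(n,φψ) ≤ W⁺(n,φ) + W⁺(n,ψ)`, dually for `W⁻`, and one divides by `n`.

If `ψ = φ⁻¹` then `φψ = id`, and `W⁺(n,id) ≥ 0` because an infinite subshift contains two
points that agree on `[0,∞)` but differ at `-1`. Otherwise, by compactness, some window
`[0,n)` determines the symbol to its left. The words of length `n + 1` then correspond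
bijectively to those of length `n` by dropping the first letter; as dropping the last letter
is also onto, it is injective too, so the window determines the symbol to its right as well,
and `X` embeds in `Aⁿ`. The case of `W⁻` is symmetric.
-/

open Set

theorem Int.forall_of_iff_add_one {p : ℤ → Prop} (h0 : p 0) (h : ∀ k, p k ↔ p (k + 1))
    (k : ℤ) : p k := by
  induction k with
  | zero => exact h0
  | succ i ih => exact (h _).1 ih
  | pred i ih => exact (h _).2 (by simpa using ih)

section Shift

variable {A : Type*} {X : Set (ℤ → A)}

@[simp] theorem zshift_zero (x : ℤ → A) : zshift 0 x = x := by
  funext i; simp [zshift]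

theorem zshift_add_one (k : ℤ) (x : ℤ → A) : zshift (k + 1) x = shift (zshift k x) := by
  funext i; simp only [zshift, shift]; ring_nf

theorem shift_injective : Function.Injective (shift : (ℤ → A) → ℤ → A) := by
  intro x y h; funext i; simpa [shift] using congrFun h (i - 1)

theorem shift_mem_iff (hX : shift '' X = X) {x : ℤ → A} : shift x ∈ X ↔ x ∈ X := by
  conv_lhs => rw [← hX]
  exact shift_injective.mem_set_image

theorem zshift_mem (hX : shift '' X = X) (k : ℤ) {x : ℤ → A} (hx : x ∈ X) : zshift k x ∈ X :=
  Int.forall_of_iff_add_one (p := fun k => zshift k x ∈ X) (by simpa using hx)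
    (fun k => by simp only [zshift_add_one, shift_mem_iff hX]) k

theorem zshift_comm {f : (ℤ → A) → ℤ → A} (hX : shift '' X = X)
    (hf : ∀ x ∈ X, f (shift x) = shift (f x)) (k : ℤ) :
    ∀ x ∈ X, f (zshift k x) = zshift k (f x) := fun x hx => by
  refine Int.forall_of_iff_add_one (p := fun k => f (zshift k x) = zshift k (f x)) (by simp)
    (fun k => ?_) k
  simp only [zshift_add_one, hf _ (zshift_mem hX k hx), shift_injective.eq_iff]

theorem iterate_shift_comm {f : (ℤ → A) → ℤ → A} (hfX : MapsTo f X X)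
    (hf : ∀ x ∈ X, f (shift x) = shift (f x)) (n : ℕ) :
    ∀ x ∈ X, f^[n] (shift x) = shift (f^[n] x) := by
  induction n with
  | zero => exact fun _ _ => rfl
  | succ n ih =>
    intro x hx
    rw [Function.iterate_succ_apply, Function.iterate_succ_apply, hf x hx, ih _ (hfX hx)]

theorem eqOn_comp_iterate {f g : (ℤ → A) → ℤ → A} (hfX : MapsTo f X X) (hgX : MapsTo g X X)
    (hfg : ∀ x ∈ X, f (g x) = g (f x)) (n : ℕ) : EqOn ((f ∘ g)^[n]) (f^[n] ∘ g^[n]) X := by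
  have hcomm : Function.Commute (hfX.restrict f X X) (hgX.restrict g X X) := fun x =>
    Subtype.ext (hfg x x.2)
  have key : ((hfX.comp hgX).restrict (f ∘ g) X X)^[n] = _ := hcomm.comp_iterate n
  intro x hx
  simpa only [MapsTo.coe_iterate_restrict, Function.comp_apply] using
    congrArg Subtype.val (congrFun key ⟨x, hx⟩)

end Shift

namespace Codes

variable {A : Type*} {X : Set (ℤ → A)} {f g : (ℤ → A) → ℤ → A} {S S' T T' U : Set ℤ}

theorem mono (h : Codes X f S T) (hS : S ⊆ S') (hT : T' ⊆ T) : Codes X f S' T' :=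
  fun x hx y hy hxy j hj => h x hx y hy (fun i hi => hxy i (hS hi)) j (hT hj)

theorem congr (h : Codes X f S T) (hfg : EqOn f g X) : Codes X g S T := by
  intro x hx y hy hxy j hj
  rw [← hfg hx, ← hfg hy]
  exact h x hx y hy hxy j hj

theorem comp (hg : Codes X g S T) (hf : Codes X f T U) (hgX : MapsTo g X X) :
    Codes X (f ∘ g) S U :=
  fun x hx y hy hxy => hf (g x) (hgX hx) (g y) (hgX hy) (hg x hx y hy hxy)

theorem image_add_const (h : Codes X f S T) (hX : shift '' X = X)
    (hf : ∀ x ∈ X, f (shift x) = shift (f x)) (a : ℤ) :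
    Codes X f ((· + a) '' S) ((· + a) '' T) := by
  rintro x hx y hy hxy _ ⟨j, hj, rfl⟩
  have := h (zshift a x) (zshift_mem hX a hx) (zshift a y) (zshift_mem hX a hy)
    (fun i hi => hxy (i + a) ⟨i, hi, rfl⟩) j hj
  rwa [zshift_comm hX hf a x hx, zshift_comm hX hf a y hy] at this

theorem exists_finset_of_id [Finite A] [TopologicalSpace A] [DiscreteTopology A]
    (hX : IsClosed X) {t : ℤ} (h : Codes X id S {t}) :
    ∃ u : Finset ℤ, ↑u ⊆ S ∧ Codes X id u {t} := by
  set K : Set ((ℤ → A) × (ℤ → A)) := X ×ˢ X ∩ {p | p.1 t ≠ p.2 t}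
  have hK : IsCompact K :=
    ((hX.prod hX).inter ((isClosed_discrete {q : A × A | q.1 ≠ q.2}).preimage
      (by fun_prop : Continuous fun p : (ℤ → A) × (ℤ → A) => (p.1 t, p.2 t)))).isCompact
  have hc : ∀ i : S, IsClosed {p : (ℤ → A) × (ℤ → A) | p.1 i = p.2 i} := fun i =>
    isClosed_eq (by fun_prop) (by fun_prop)
  obtain ⟨u, hu⟩ := hK.elim_finite_subfamily_closed _ hc <| by
    refine eq_empty_of_forall_notMem fun p ⟨⟨⟨hx, hy⟩, hne⟩, hagree⟩ => hne ?_
    exact h p.1 hx p.2 hy (fun i hi => mem_iInter.1 hagree ⟨i, hi⟩) t rfl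
  refine ⟨u.map (Function.Embedding.subtype _), by simp, ?_⟩
  rintro x hx y hy hxy _ rfl
  by_contra hne
  refine (eq_empty_iff_forall_notMem.1 hu) (x, y) ⟨⟨⟨hx, hy⟩, hne⟩, ?_⟩
  simp only [mem_iInter]
  exact fun i hi => hxy i (Finset.mem_map_of_mem _ hi)

end Codes

/-- The map through which `v` factors is a surjection of the finite set `u '' s` onto itself,
hence injective. -/
theorem imp_of_imp_of_image_eq {α β : Type*} [Finite β] {s : Set α} {u v : α → β}
    (h : u '' s = v '' s) (huv : ∀ a ∈ s, ∀ b ∈ s, u a = u b → v a = v b) :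
    ∀ a ∈ s, ∀ b ∈ s, v a = v b → u a = u b := by
  set P := (fun a => (u a, v a)) '' s
  have hfst : Prod.fst '' P = u '' s := image_image _ _ _
  have hsnd : Prod.snd '' P = v '' s := image_image _ _ _
  have hfst_inj : InjOn Prod.fst P := by
    rintro _ ⟨a, ha, rfl⟩ _ ⟨b, hb, rfl⟩ hab
    exact Prod.ext hab (huv a ha b hb hab)
  have hsnd_inj : InjOn Prod.snd P :=
    injOn_of_ncard_image_eq (by rw [hsnd, ← h, ← hfst, hfst_inj.ncard_image])
  intro a ha b hb hab
  exact congrArg Prod.fst (hsnd_inj (mem_image_of_mem _ ha) (mem_image_of_mem _ hb) hab)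

section Finiteness

variable {A : Type*} {X : Set (ℤ → A)} {n : ℕ} {x y : ℤ → A}

theorem eqOn_shift_Ico (h : EqOn x y (Ico 0 n)) (hn : x n = y n) :
    EqOn (shift x) (shift y) (Ico 0 n) := by
  rintro i ⟨hi₀, hi⟩
  rcases (Int.add_one_le_iff.2 hi).lt_or_eq with hlt | heq
  · exact h ⟨by omega, hlt⟩
  · simpa [shift, heq] using hn

theorem eqOn_Ico_of_eqOn_shift (h : EqOn (shift x) (shift y) (Ico 0 n)) (h₀ : x 0 = y 0) :
    EqOn x y (Ico 0 n) := by
  rintro i ⟨hi₀, hi⟩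
  rcases hi₀.eq_or_lt with heq | hpos
  · rwa [← heq]
  · simpa [shift] using h (show i - 1 ∈ Ico 0 (n : ℤ) from ⟨by omega, by omega⟩)

theorem eqOn_Ico_iff_eqOn_shift [Finite A] (hX : shift '' X = X)
    (h : Codes X id (Ico 0 n) {-1} ∨ Codes X id (Ico 0 n) {(n : ℤ)})
    (hx : x ∈ X) (hy : y ∈ X) :
    EqOn x y (Ico 0 n) ↔ EqOn (shift x) (shift y) (Ico 0 n) := by
  set w : (ℤ → A) → Ico (0 : ℤ) n → A := (Ico (0 : ℤ) n).domRestrict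
  have hw : ∀ {x y}, w x = w y ↔ EqOn x y (Ico 0 n) := domRestrict_eq_domRestrict_iff
  have himage : w '' X = (w ∘ shift) '' X := by rw [image_comp, hX]
  obtain ⟨hfst, hsnd⟩ : (∀ x ∈ X, ∀ y ∈ X, w x = w y → (w ∘ shift) x = (w ∘ shift) y) ∧
      (∀ x ∈ X, ∀ y ∈ X, (w ∘ shift) x = (w ∘ shift) y → w x = w y) := by
    rcases h with hleft | hright
    · have hsnd : ∀ x ∈ X, ∀ y ∈ X, (w ∘ shift) x = (w ∘ shift) y → w x = w y :=
        fun x hx y hy hxy => hw.2 <| eqOn_Ico_of_eqOn_shift (hw.1 hxy) <|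
          hleft _ ((shift_mem_iff hX).2 hx) _ ((shift_mem_iff hX).2 hy) (hw.1 hxy) (-1) rfl
      exact ⟨imp_of_imp_of_image_eq himage.symm hsnd, hsnd⟩
    · have hfst : ∀ x ∈ X, ∀ y ∈ X, w x = w y → (w ∘ shift) x = (w ∘ shift) y :=
        fun x hx y hy hxy => hw.2 <| eqOn_shift_Ico (hw.1 hxy) (hright x hx y hy (hw.1 hxy) n rfl)
      exact ⟨hfst, imp_of_imp_of_image_eq himage hfst⟩
  exact ⟨fun hxy => hw.1 (hfst x hx y hy (hw.2 hxy)), fun hxy => hw.1 (hsnd x hx y hy (hw.2 hxy))⟩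

theorem finite_of_codes_id_Ico [Finite A] (hX : shift '' X = X) (hn : 0 < n)
    (h : Codes X id (Ico 0 n) {-1} ∨ Codes X id (Ico 0 n) {(n : ℤ)}) : X.Finite := by
  refine Finite.of_finite_image (f := (Ico (0 : ℤ) n).domRestrict) (toFinite _)
    fun x hx y hy hxy => funext fun k => ?_
  have hk := Int.forall_of_iff_add_one (p := fun k => EqOn (zshift k x) (zshift k y) (Ico 0 n))
    (by simpa using domRestrict_eq_domRestrict_iff.1 hxy)
    (fun k => by
      simp only [zshift_add_one]
      exact eqOn_Ico_iff_eqOn_shift hX h (zshift_mem hX k hx) (zshift_mem hX k hy)) k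
  simpa [zshift] using hk (show (0 : ℤ) ∈ Ico 0 (n : ℤ) by simpa using hn)

end Finiteness

namespace IsSubshift

variable {A : Type*} [Finite A] [TopologicalSpace A] [DiscreteTopology A] {X : Set (ℤ → A)}

theorem not_codes_id_Ici (hX : IsSubshift X) (hinf : X.Infinite) :
    ¬ Codes X id (Ici 0) {-1} := fun h => by
  obtain ⟨u, hu, hcodes⟩ := Codes.exists_finset_of_id hX.1 h
  obtain ⟨M, hM⟩ := u.bddAbove
  refine hinf (finite_of_codes_id_Ico hX.2 (n := M.toNat + 1) (by omega) (Or.inl ?_))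
  exact hcodes.mono (fun i hi => ⟨hu hi, by have := hM hi; omega⟩) subset_rfl

theorem not_codes_id_Iic (hX : IsSubshift X) (hinf : X.Infinite) :
    ¬ Codes X id (Iic 0) {1} := fun h => by
  obtain ⟨u, hu, hcodes⟩ := Codes.exists_finset_of_id hX.1 h
  obtain ⟨M, hM⟩ := u.bddBelow
  set n := (-M).toNat + 1
  have hwin : Codes X id (Ico (1 - n) 1) {1} :=
    hcodes.mono (fun i hi => ⟨by have := hM hi; omega, Int.lt_add_one_iff.2 (hu hi)⟩) subset_rfl
  have := hwin.image_add_const hX.2 (fun _ _ => rfl) (n - 1)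
  refine hinf (finite_of_codes_id_Ico hX.2 (n := n) (by omega) (Or.inr ?_))
  simpa using this

end IsSubshift

section CodingSets

variable {A : Type*} [TopologicalSpace A] {X : Set (ℤ → A)} {φ ψ : (ℤ → A) → ℤ → A}
  {n : ℕ} {W₁ W₂ : ℤ}

theorem add_mem_WplusSet_comp (hX : shift '' X = X) (hφ : IsEndo X φ) (hψ : IsEndo X ψ)
    (hcomm : ∀ x ∈ X, φ (ψ x) = ψ (φ x)) (h₁ : W₁ ∈ WplusSet X φ n)
    (h₂ : W₂ ∈ WplusSet X ψ n) : W₁ + W₂ ∈ WplusSet X (φ ∘ ψ) n := by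
  have h₁' : Codes X (φ^[n]) (Ici W₂) (Ici (W₁ + W₂)) := by
    simpa using Codes.image_add_const h₁ hX (iterate_shift_comm hφ.maps hφ.comm n) W₂
  exact (Codes.comp h₂ h₁' (hψ.maps.iterate n)).congr
    (eqOn_comp_iterate hφ.maps hψ.maps hcomm n).symm

theorem add_mem_WminusSet_comp (hX : shift '' X = X) (hφ : IsEndo X φ) (hψ : IsEndo X ψ)
    (hcomm : ∀ x ∈ X, φ (ψ x) = ψ (φ x)) (h₁ : W₁ ∈ WminusSet X φ n)
    (h₂ : W₂ ∈ WminusSet X ψ n) : W₁ + W₂ ∈ WminusSet X (φ ∘ ψ) n := by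
  have h₁' : Codes X (φ^[n]) (Iic W₂) (Iic (W₁ + W₂)) := by
    simpa using Codes.image_add_const h₁ hX (iterate_shift_comm hφ.maps hφ.comm n) W₂
  exact (Codes.comp h₂ h₁' (hψ.maps.iterate n)).congr
    (eqOn_comp_iterate hφ.maps hψ.maps hcomm n).symm

variable [Finite A] [DiscreteTopology A]

theorem IsSubshift.nonneg_of_mem_WplusSet (hX : IsSubshift X) (hinf : X.Infinite)
    (hφ : ∀ x ∈ X, φ x = x) (h : W₁ ∈ WplusSet X φ n) : 0 ≤ W₁ := by
  by_contra! hneg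
  refine hX.not_codes_id_Ici hinf ((Codes.congr h fun x hx => ?_).mono subset_rfl ?_)
  · exact Function.iterate_fixed (hφ x hx) n
  · simp only [singleton_subset_iff, mem_Ici]; omega

theorem IsSubshift.nonpos_of_mem_WminusSet (hX : IsSubshift X) (hinf : X.Infinite)
    (hφ : ∀ x ∈ X, φ x = x) (h : W₁ ∈ WminusSet X φ n) : W₁ ≤ 0 := by
  by_contra! hpos
  refine hX.not_codes_id_Iic hinf ((Codes.congr h fun x hx => ?_).mono subset_rfl ?_)
  · exact Function.iterate_fixed (hφ x hx) n
  · simp only [singleton_subset_iff, mem_Iic]; omega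

end CodingSets

/-- For commuting endomorphisms: `α⁺(φψ) ≤ α⁺(φ) + α⁺(ψ)` and
`α⁻(φψ) ≥ α⁻(φ) + α⁻(ψ)`; in particular, if `ψ` is inverse to `φ`, then
`α⁺(φ) + α⁺(φ⁻¹) ≥ 0` and `α⁻(φ) + α⁻(φ⁻¹) ≤ 0`. -/
theorem alpha_composition {A : Type*} [Fintype A] [TopologicalSpace A]
    [DiscreteTopology A] (X : Set (ℤ → A)) (hX : IsSubshift X) (hinf : X.Infinite)
    (φ ψ : (ℤ → A) → (ℤ → A)) (hφ : IsEndo X φ) (hψ : IsEndo X ψ)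
    (hcomm : ∀ x ∈ X, φ (ψ x) = ψ (φ x))
    (Wp₁ Wm₁ Wp₂ Wm₂ Wp₃ Wm₃ : ℕ → ℤ)
    (hWp₁ : ∀ n, IsLeast (WplusSet X φ n) (Wp₁ n))
    (hWm₁ : ∀ n, IsGreatest (WminusSet X φ n) (Wm₁ n))
    (hWp₂ : ∀ n, IsLeast (WplusSet X ψ n) (Wp₂ n))
    (hWm₂ : ∀ n, IsGreatest (WminusSet X ψ n) (Wm₂ n))
    (hWp₃ : ∀ n, IsLeast (WplusSet X (φ ∘ ψ) n) (Wp₃ n))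
    (hWm₃ : ∀ n, IsGreatest (WminusSet X (φ ∘ ψ) n) (Wm₃ n))
    (αp₁ αm₁ αp₂ αm₂ αp₃ αm₃ : ℝ)
    (hαp₁ : Tendsto (fun n : ℕ => (Wp₁ n : ℝ) / n) atTop (𝓝 αp₁))
    (hαm₁ : Tendsto (fun n : ℕ => (Wm₁ n : ℝ) / n) atTop (𝓝 αm₁))
    (hαp₂ : Tendsto (fun n : ℕ => (Wp₂ n : ℝ) / n) atTop (𝓝 αp₂))
    (hαm₂ : Tendsto (fun n : ℕ => (Wm₂ n : ℝ) / n) atTop (𝓝 αm₂))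
    (hαp₃ : Tendsto (fun n : ℕ => (Wp₃ n : ℝ) / n) atTop (𝓝 αp₃))
    (hαm₃ : Tendsto (fun n : ℕ => (Wm₃ n : ℝ) / n) atTop (𝓝 αm₃)) :
    (αp₃ ≤ αp₁ + αp₂ ∧ αm₁ + αm₂ ≤ αm₃) ∧
    ((∀ x ∈ X, ψ (φ x) = x) → (0 ≤ αp₁ + αp₂ ∧ αm₁ + αm₂ ≤ 0)) := by
  have hp : ∀ n, Wp₃ n ≤ Wp₁ n + Wp₂ n := fun n =>
    (hWp₃ n).2 (add_mem_WplusSet_comp hX.2 hφ hψ hcomm (hWp₁ n).1 (hWp₂ n).1)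
  have hm : ∀ n, Wm₁ n + Wm₂ n ≤ Wm₃ n := fun n =>
    (hWm₃ n).2 (add_mem_WminusSet_comp hX.2 hφ hψ hcomm (hWm₁ n).1 (hWm₂ n).1)
  have hαp : αp₃ ≤ αp₁ + αp₂ := le_of_tendsto_of_tendsto' hαp₃ (hαp₁.add hαp₂) fun n => by
    rw [← add_div]; gcongr; exact_mod_cast hp n
  have hαm : αm₁ + αm₂ ≤ αm₃ := le_of_tendsto_of_tendsto' (hαm₁.add hαm₂) hαm₃ fun n => by
    rw [← add_div]; gcongr; exact_mod_cast hm n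
  refine ⟨⟨hαp, hαm⟩, fun hinv => ?_⟩
  have hid : ∀ x ∈ X, (φ ∘ ψ) x = x := fun x hx => (hcomm x hx).trans (hinv x hx)
  have hαp₃_nonneg : 0 ≤ αp₃ := ge_of_tendsto' hαp₃ fun n => div_nonneg
    (Int.cast_nonneg (hX.nonneg_of_mem_WplusSet hinf hid (hWp₃ n).1)) n.cast_nonneg
  have hαm₃_nonpos : αm₃ ≤ 0 := le_of_tendsto' hαm₃ fun n => div_nonpos_of_nonpos_of_nonneg
    (by exact_mod_cast hX.nonpos_of_mem_WminusSet hinf hid (hWm₃ n).1) n.cast_nonneg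
  exact ⟨hαp₃_nonneg.trans hαp, hαm.trans hαm₃_nonpos⟩
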